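/- Let n ≥ 1. For every α > 0 there exist γ ∈ (0,1) (sufficiently close to 1) and a constant C = C(n, α, γ) > 0 such that for every closed set F ⊆ ℝⁿ whose complement has finite Lebesgue measure and every measurable function Φ : ℝⁿ × (0,∞) → [0,∞], one has ∫∫_{𝓡^α(F*)} Φ(x,t) tⁿ dx dt ≤ C ∫_F ( ∫∫_{Γ(x)} Φ(y,t) dy dt ) dx, where F* denotes the set of points of global γ-density with respect to F. -/

import Mathlib

/-! If `(y, t)` lies in the cone of aperture `α` over a point `x` of `F*`, then
`B(y, t) ⊆ B(x, (1 + α) t)`, and the part of `B(x, (1 + α) t)` missing `F` has measure at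
most `(1 - γ) (1 + α)ⁿ |B(y, t)|`. For `γ` close to `1` this is at most `|B(y, t)| / 2`, so
`tⁿ ≲ |F ∩ B(y, t)|`. Integrating against `Φ` and exchanging the order of integration
(`(y, t)` lies in `Γ(x)` exactly when `x ∈ B(y, t)`) gives the claim. -/

open MeasureTheory Set
open scoped ENNReal

noncomputable section

/-- The cone of aperture `α` with vertex `x`:
`Γ^α(x) = {(y,t) ∈ ℝⁿ × (0,∞) : |x − y| < α t}`. -/
def cone (n : ℕ) (α : ℝ) (x : EuclideanSpace ℝ (Fin n)) :
    Set (EuclideanSpace ℝ (Fin n) × ℝ) :=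
  {p | 0 < p.2 ∧ dist x p.1 < α * p.2}

/-- The saw-tooth region `𝓡^α(F) = ⋃_{x ∈ F} Γ^α(x)`. -/
def sawtooth (n : ℕ) (α : ℝ) (F : Set (EuclideanSpace ℝ (Fin n))) :
    Set (EuclideanSpace ℝ (Fin n) × ℝ) :=
  ⋃ x ∈ F, cone n α x

/-- The set `F*` of points of global `γ`-density with respect to `F`:
`{x : for every ball B centered at x, |F ∩ B| / |B| ≥ γ}`. -/
def densityPoints (n : ℕ) (γ : ℝ) (F : Set (EuclideanSpace ℝ (Fin n))) :
    Set (EuclideanSpace ℝ (Fin n)) :=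
  {x | ∀ r : ℝ, 0 < r →
    ENNReal.ofReal γ * volume (Metric.ball x r) ≤ volume (F ∩ Metric.ball x r)}

open Metric

lemma mul_measure_add_le_measure_inter_add {X : Type*} [MeasurableSpace X] (μ : Measure X)
    {F s B : Set X} {c : ℝ≥0∞} (hs : MeasurableSet s) (hsB : s ⊆ B)
    (hB : c * μ B ≤ μ (F ∩ B)) :
    c * μ B + μ s ≤ μ (F ∩ s) + μ B := by
  have hcover : F ∩ B ⊆ (F ∩ s) ∪ (B \ s) := fun z ⟨hzF, hzB⟩ => by
    by_cases hzs : z ∈ s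
    · exact Or.inl ⟨hzF, hzs⟩
    · exact Or.inr ⟨hzB, hzs⟩
  calc c * μ B + μ s ≤ μ (F ∩ B) + μ s := by gcongr
    _ ≤ μ (F ∩ s) + μ (B \ s) + μ s := by
      gcongr; exact (measure_mono hcover).trans (measure_union_le _ _)
    _ = μ (F ∩ s) + μ B := by
      rw [add_assoc, ← measure_sdiff_add_inter B hs, inter_eq_right.2 hsB]

-- chosen so that `(1 - γ) (1 + α) ^ d = 1 / 2`
def densityThreshold (d : ℕ) (α : ℝ) : ℝ := 1 - 1 / (2 * (1 + α) ^ d)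

lemma densityThreshold_mem_Ioo (d : ℕ) {α : ℝ} (hα : 0 ≤ α) :
    densityThreshold d α ∈ Ioo (0 : ℝ) 1 := by
  have hK : 1 ≤ (1 + α) ^ d := one_le_pow₀ (by linarith)
  have hinv : 1 / (2 * (1 + α) ^ d) ≤ 1 / 2 := by gcongr; linarith
  have hpos : 0 < 1 / (2 * (1 + α) ^ d) := by positivity
  constructor <;> unfold densityThreshold <;> linarith

section AddHaar

open Module Measure

variable {E : Type*} [NormedAddCommGroup E] [NormedSpace ℝ E] [MeasurableSpace E] [BorelSpace E]
  [FiniteDimensional ℝ E] (μ : Measure E) [μ.IsAddHaarMeasure]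

lemma measure_ball_le_two_mul_measure_inter_ball {F : Set E} {x y : E} {α t : ℝ}
    (hα : 0 ≤ α) (hxy : dist y x < α * t)
    (hx : ENNReal.ofReal (densityThreshold (finrank ℝ E) α) * μ (ball x ((1 + α) * t)) ≤
      μ (F ∩ ball x ((1 + α) * t))) :
    μ (ball y t) ≤ 2 * μ (F ∩ ball y t) := by
  set K : ℝ := (1 + α) ^ finrank ℝ E
  set V := μ (ball y t)
  have hsub : ball y t ⊆ ball x ((1 + α) * t) := fun z hz => by
    rw [mem_ball] at hz ⊢
    calc dist z x ≤ dist z y + dist y x := dist_triangle _ _ _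
      _ < t + α * t := add_lt_add hz hxy
      _ = (1 + α) * t := by ring
  have hscale : μ (ball x ((1 + α) * t)) = ENNReal.ofReal K * V := by
    rw [addHaar_ball_mul_of_pos μ x (by linarith) t, ← addHaar_ball_center μ y]
  have hcoeff : ENNReal.ofReal (densityThreshold (finrank ℝ E) α) * ENNReal.ofReal K + 1 =
      ENNReal.ofReal K + 2⁻¹ := by
    have hK : 1 ≤ K := one_le_pow₀ (by linarith)
    have hγK : densityThreshold (finrank ℝ E) α * K = K - 1 / 2 := by
      unfold densityThreshold; field_simp; ring
    rw [← ENNReal.ofReal_mul (densityThreshold_mem_Ioo _ hα).1.le, hγK, ← ENNReal.ofReal_one,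
      ← ENNReal.ofReal_add (by linarith) zero_le_one, show K - 1 / 2 + 1 = K + 2⁻¹ by ring,
      ENNReal.ofReal_add (by linarith) (by norm_num), ENNReal.ofReal_inv_of_pos two_pos,
      ENNReal.ofReal_ofNat]
  have hmain := mul_measure_add_le_measure_inter_add μ measurableSet_ball hsub hx
  rw [hscale] at hmain
  have hhalf : ENNReal.ofReal K * V + 2⁻¹ * V ≤ ENNReal.ofReal K * V + μ (F ∩ ball y t) :=
    calc ENNReal.ofReal K * V + 2⁻¹ * V
        = ENNReal.ofReal (densityThreshold (finrank ℝ E) α) * (ENNReal.ofReal K * V) + V := by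
          rw [← add_mul, ← hcoeff, add_mul, one_mul, mul_assoc]
      _ ≤ ENNReal.ofReal K * V + μ (F ∩ ball y t) := by
          rwa [add_comm _ (ENNReal.ofReal K * V)] at hmain
  have hfin : ENNReal.ofReal K * V ≠ ∞ :=
    ENNReal.mul_ne_top ENNReal.ofReal_ne_top measure_ball_lt_top.ne
  calc V = 2 * (2⁻¹ * V) := by
        rw [← mul_assoc, ENNReal.mul_inv_cancel two_ne_zero ENNReal.ofNat_ne_top, one_mul]
    _ ≤ 2 * μ (F ∩ ball y t) := by gcongr; exact (ENNReal.add_le_add_iff_left hfin).1 hhalf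

end AddHaar

section Cones

variable {n : ℕ}

lemma isOpen_cone (α : ℝ) (x : EuclideanSpace ℝ (Fin n)) : IsOpen (cone n α x) :=
  (isOpen_lt continuous_const continuous_snd).inter
    (isOpen_lt (continuous_const.dist continuous_fst) (continuous_const.mul continuous_snd))

lemma isOpen_sawtooth (α : ℝ) (F : Set (EuclideanSpace ℝ (Fin n))) :
    IsOpen (sawtooth n α F) :=
  isOpen_biUnion fun x _ => isOpen_cone α x

lemma mem_cone_one_iff {x : EuclideanSpace ℝ (Fin n)} {p : EuclideanSpace ℝ (Fin n) × ℝ} :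
    p ∈ cone n 1 x ↔ x ∈ ball p.1 p.2 := by
  rw [mem_ball, cone, mem_ofPred_eq, one_mul]
  exact ⟨And.right, fun h => ⟨dist_nonneg.trans_lt h, h⟩⟩

lemma lintegral_mul_measure_inter_ball (F : Set (EuclideanSpace ℝ (Fin n)))
    {Φ : EuclideanSpace ℝ (Fin n) × ℝ → ℝ≥0∞} (hΦ : Measurable Φ) :
    ∫⁻ p, Φ p * volume (F ∩ ball p.1 p.2) = ∫⁻ x in F, ∫⁻ p in cone n 1 x, Φ p := by
  have hmeas : MeasurableSet {q : (EuclideanSpace ℝ (Fin n) × ℝ) × EuclideanSpace ℝ (Fin n) |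
      q.2 ∈ ball q.1.1 q.1.2} :=
    (isOpen_lt (continuous_snd.dist (continuous_fst.comp continuous_fst))
      (continuous_snd.comp continuous_fst)).measurableSet
  calc ∫⁻ p, Φ p * volume (F ∩ ball p.1 p.2)
      = ∫⁻ p, ∫⁻ x in F, (ball p.1 p.2).indicator (fun _ => Φ p) x := by
        refine lintegral_congr fun p => ?_
        rw [lintegral_indicator_const measurableSet_ball,
          Measure.restrict_apply measurableSet_ball, inter_comm]
    _ = ∫⁻ x in F, ∫⁻ p, (ball p.1 p.2).indicator (fun _ => Φ p) x :=
        lintegral_lintegral_swap ((hΦ.comp measurable_fst).indicator hmeas).aemeasurable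
    _ = ∫⁻ x in F, ∫⁻ p in cone n 1 x, Φ p := by
        refine lintegral_congr fun x => ?_
        rw [← lintegral_indicator (isOpen_cone 1 x).measurableSet]
        congr 1 with p
        simp [indicator, mem_cone_one_iff]

lemma ofReal_pow_le_of_mem_sawtooth {α : ℝ} (hα : 0 ≤ α)
    {F : Set (EuclideanSpace ℝ (Fin n))} {p : EuclideanSpace ℝ (Fin n) × ℝ}
    (hp : p ∈ sawtooth n α (densityPoints n (densityThreshold n α) F)) :
    ENNReal.ofReal (p.2 ^ n) ≤
      2 / volume (ball (0 : EuclideanSpace ℝ (Fin n)) 1) * volume (F ∩ ball p.1 p.2) := by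
  obtain ⟨x, hx, ht, hxp⟩ :
      ∃ x ∈ densityPoints n (densityThreshold n α) F, p ∈ cone n α x := by
    simpa only [sawtooth, mem_iUnion, exists_prop] using hp
  have hdens := hx _ (mul_pos (by linarith) ht : 0 < (1 + α) * p.2)
  have hball := measure_ball_le_two_mul_measure_inter_ball volume (x := x) (y := p.1) hα
    (by rwa [dist_comm]) (by rwa [finrank_euclideanSpace_fin])
  rw [Measure.addHaar_ball_of_pos volume _ ht, finrank_euclideanSpace_fin] at hball
  rw [← ENNReal.mul_div_right_comm,
    ENNReal.le_div_iff_mul_le (Or.inl (measure_ball_pos _ _ one_pos).ne')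
      (Or.inl measure_ball_lt_top.ne)]
  exact hball

end Cones

theorem stmt0_general (n : ℕ) (α : ℝ) (hα : 0 < α) :
    ∃ γ ∈ Set.Ioo (0 : ℝ) 1, ∃ C : ℝ, 0 < C ∧
      ∀ F : Set (EuclideanSpace ℝ (Fin n)), IsClosed F → volume Fᶜ < ⊤ →
        ∀ Φ : EuclideanSpace ℝ (Fin n) × ℝ → ℝ≥0∞, Measurable Φ →
          ∫⁻ p in sawtooth n α (densityPoints n γ F), Φ p * ENNReal.ofReal (p.2 ^ n) ≤
            ENNReal.ofReal C * ∫⁻ x in F, ∫⁻ p in cone n 1 x, Φ p := by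
  set ω := volume (ball (0 : EuclideanSpace ℝ (Fin n)) 1)
  have hω : ω ≠ 0 := (measure_ball_pos _ _ one_pos).ne'
  have hω' : ω ≠ ∞ := measure_ball_lt_top.ne
  refine ⟨densityThreshold n α, densityThreshold_mem_Ioo n hα.le, 2 / ω.toReal,
    div_pos two_pos (ENNReal.toReal_pos hω hω'), fun F _ _ Φ hΦ => ?_⟩
  rw [ENNReal.ofReal_div_of_pos (ENNReal.toReal_pos hω hω'), ENNReal.ofReal_toReal hω',
    ENNReal.ofReal_ofNat, ← lintegral_mul_measure_inter_ball F hΦ, ← lintegral_const_mul' _ _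
      (ENNReal.div_ne_top ENNReal.ofNat_ne_top hω)]
  calc ∫⁻ p in sawtooth n α (densityPoints n (densityThreshold n α) F),
        Φ p * ENNReal.ofReal (p.2 ^ n)
      ≤ ∫⁻ p in sawtooth n α (densityPoints n (densityThreshold n α) F),
          2 / ω * (Φ p * volume (F ∩ ball p.1 p.2)) :=
        setLIntegral_mono' (isOpen_sawtooth _ _).measurableSet fun p hp => by
          rw [mul_left_comm]
          exact mul_le_mul_right (ofReal_pow_le_of_mem_sawtooth hα.le hp) _
    _ ≤ ∫⁻ p, 2 / ω * (Φ p * volume (F ∩ ball p.1 p.2)) := setLIntegral_le_lintegral _ _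

/-- For every `α > 0` there exist `γ ∈ (0,1)` and `C = C(n,α,γ) > 0` such that for every
closed set `F ⊆ ℝⁿ` whose complement has finite measure and every nonnegative measurable `Φ`,
`∫∫_{𝓡^α(F*)} Φ(x,t) tⁿ dx dt ≤ C ∫_F (∫∫_{Γ(x)} Φ(y,t) dy dt) dx`. -/
theorem stmt0 (n : ℕ) (hn : 1 ≤ n) (α : ℝ) (hα : 0 < α) :
    ∃ γ ∈ Set.Ioo (0 : ℝ) 1, ∃ C : ℝ, 0 < C ∧
      ∀ F : Set (EuclideanSpace ℝ (Fin n)), IsClosed F → volume Fᶜ < ⊤ →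
        ∀ Φ : EuclideanSpace ℝ (Fin n) × ℝ → ℝ≥0∞, Measurable Φ →
          ∫⁻ p in sawtooth n α (densityPoints n γ F), Φ p * ENNReal.ofReal (p.2 ^ n) ≤
            ENNReal.ofReal C * ∫⁻ x in F, ∫⁻ p in cone n 1 x, Φ p :=
  stmt0_general n α hα
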